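/- Let Δ, ν be integers with Δ, ν ≥ 2 such that ⌈Δ/2⌉ does not divide ν, and let G₁ be a finite simple graph with no isolated vertices, maximum degree at most Δ, matching number at most ν, and exactly Δν + ⌊ν/⌈Δ/2⌉⌋·⌊Δ/2⌋ edges. Then there exists a finite simple graph G₂ with no isolated vertices, maximum degree at most Δ, matching number at most ν, exactly Δν + ⌊ν/⌈Δ/2⌉⌋·⌊Δ/2⌋ edges, and such that G₂ is не isomorphic to G₁. -/

import Mathlib

/-- The number of edges of a simple graph. -/
noncomputable def edgeCount {V : Type*} (G : SimpleGraph V) : ℕ := G.edgeSet.ncard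

/-- The independence number: largest size of a set of pairwise nonadjacent vertices. -/
noncomputable def indNum {V : Type*} (G : SimpleGraph V) : ℕ :=
  sSup {n | ∃ s : Finset V, (∀ x ∈ s, ∀ y ∈ s, ¬ G.Adj x y) ∧ s.card = n}

/-- A finite set of edges of `G` forming a matching (pairwise vertex-disjoint edges). -/
def IsMatchingFinset {V : Type*} (G : SimpleGraph V) (m : Finset (Sym2 V)) : Prop :=
  ↑m ⊆ G.edgeSet ∧ ∀ e ∈ m, ∀ f ∈ m, e ≠ f → ∀ v : V, ¬(v ∈ e ∧ v ∈ f)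

/-- The matching number: largest size of a matching. -/
noncomputable def matNum {V : Type*} (G : SimpleGraph V) : ℕ :=
  sSup {n | ∃ m : Finset (Sym2 V), IsMatchingFinset G m ∧ m.card = n}

/-- The maximum degree. -/
noncomputable def maxDeg {V : Type*} (G : SimpleGraph V) : ℕ :=
  ⨆ v, (G.neighborSet v).ncard

/-- `Gext α ν`: disjoint union of `K_{2ν+1}` with `α - 1` isolated vertices. -/
def Gext (α ν : ℕ) : SimpleGraph (Fin (2*ν+1) ⊕ Fin (α-1)) :=
  SimpleGraph.fromRel (fun x y => x.isLeft = true ∧ y.isLeft = true)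

/-- `Hext α ν`: the complete split graph: clique of size `ν` joined to an
independent set of size `α`. -/
def Hext (α ν : ℕ) : SimpleGraph (Fin ν ⊕ Fin α) :=
  SimpleGraph.fromRel (fun x _ => x.isLeft = true)

/-- `Fext α Δ`: disjoint union of `α` copies of `K_{Δ+1}`. -/
def Fext (α Δ : ℕ) : SimpleGraph (Fin α × Fin (Δ+1)) :=
  SimpleGraph.fromRel (fun x y => x.1 = y.1)

/-- `Jgraph Δ`: for even `Δ` this is `K_{Δ+1}`; for odd `Δ = 2j-1` it is `K_{2j}`
minus a perfect matching (vertices `2k, 2k+1` are nonadjacent) together with an extra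
vertex (the last one) joined to all but one (vertex `0`) of the other vertices. -/
def Jgraph (Δ : ℕ) : SimpleGraph (Fin (2*((Δ+1)/2)+1)) :=
  SimpleGraph.fromRel (fun x y =>
    if Δ % 2 = 0 then True
    else (x.val < 2*((Δ+1)/2) ∧ y.val < 2*((Δ+1)/2) ∧ x.val/2 ≠ y.val/2) ∨
         (x.val = 2*((Δ+1)/2) ∧ 0 < y.val ∧ y.val < 2*((Δ+1)/2)))

/-- `G` is edge-extremal for `(α, ν)`: it has independence number `α`, matching number `ν`,
and the maximum number of edges among all finite simple graphs with independence number `α`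
and matching number `ν`. -/
def EdgeExtremal {V : Type*} [Fintype V] (G : SimpleGraph V) (α ν : ℕ) : Prop :=
  indNum G = α ∧ matNum G = ν ∧
    ∀ (W : Type) [Fintype W] (H : SimpleGraph W),
      indNum H = α → matNum H = ν → edgeCount H ≤ edgeCount G

/-!
Write `j = ⌈Δ/2⌉ = (Δ + 1) / 2` and `ν = j t + r` with `0 < r < j`. Disjoint union of graphs
without isolated vertices and of maximum degree at most `Δ` adds orders, matching bounds and
edge counts. The building blocks are the stars `K_{1,Δ}`, the graph `K_{2,Δ}`, and, for
`k ∈ {j, j + 1}`, a graph `J_k` on `2k + 1` vertices (so of matching number at most `k`) whose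
degrees are all `Δ` but at most one `Δ - 1`, hence with `Δ k + ⌊Δ/2⌋` edges. `J_k` is the
complement of a sparse graph of minimum degree `2k - Δ ≤ 3`: the empty graph, the chords
`{i, i + k}`, a cycle, or the union of the last two.

Then `t J_j + r K_{1,Δ}` has the required parameters, and so does the graph obtained from it by
replacing one `J_j` and one star by `J_{j+1}` when `t > 0`, or two stars by `K_{2,Δ}` when
`t = 0` (and so `r = ν ≥ 2`). These two graphs have different orders, so one of them is not
isomorphic to `G₁`.
-/

open Finset SimpleGraph

section

variable {V W : Type*}

theorem edgeCount_eq_card_edgeFinset [Fintype V] (G : SimpleGraph V) [DecidableRel G.Adj] :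
    edgeCount G = #G.edgeFinset := by
  rw [edgeCount, ← coe_edgeFinset, Set.ncard_coe_finset]

theorem ncard_neighborSet_eq_degree [Fintype V] (G : SimpleGraph V) [DecidableRel G.Adj]
    (v : V) : (G.neighborSet v).ncard = G.degree v := by
  rw [← Nat.card_coe_set_eq, Nat.card_eq_fintype_card, card_neighborSet_eq_degree]

theorem maxDeg_le_iff [Finite V] {G : SimpleGraph V} {Δ : ℕ} :
    maxDeg G ≤ Δ ↔ ∀ v, (G.neighborSet v).ncard ≤ Δ :=
  ⟨fun h v => (le_ciSup (Set.finite_range _).bddAbove v).trans h, ciSup_le'⟩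

theorem isMatchingFinset_empty (G : SimpleGraph V) : IsMatchingFinset G ∅ := by
  simp [IsMatchingFinset]

theorem matNum_le_iff [Finite V] {G : SimpleGraph V} {b : ℕ} :
    matNum G ≤ b ↔ ∀ m, IsMatchingFinset G m → #m ≤ b := by
  classical
  have := Fintype.ofFinite V
  refine ⟨fun h m hm => ?_, fun h => csSup_le ⟨0, ∅, isMatchingFinset_empty G, rfl⟩ ?_⟩
  · have hbdd : BddAbove {n | ∃ m, IsMatchingFinset G m ∧ #m = n} :=
      ⟨Fintype.card (Sym2 V), by rintro _ ⟨m', -, rfl⟩; exact card_le_univ m'⟩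
    exact (le_csSup hbdd ⟨m, hm, rfl⟩).trans h
  · rintro _ ⟨m, hm, rfl⟩
    exact h m hm

theorem IsMatchingFinset.card_filter_mem_le_one [DecidableEq V] {G : SimpleGraph V}
    {m : Finset (Sym2 V)} (hm : IsMatchingFinset G m) (v : V) : #{e ∈ m | v ∈ e} ≤ 1 := by
  refine card_le_one.2 fun e he f hf => ?_
  rw [mem_filter] at he hf
  by_contra hne
  exact hm.2 e he.1 f hf.1 hne v ⟨he.2, hf.2⟩

theorem matNum_le_card_div_two [Fintype V] (G : SimpleGraph V) :
    matNum G ≤ Fintype.card V / 2 := by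
  classical
  refine matNum_le_iff.2 fun m hm => ?_
  have : #m * 2 ≤ #(univ : Finset V) * 1 := by
    refine card_mul_le_card_mul (fun e v => v ∈ e) (fun e he => ?_)
      (fun v _ => hm.card_filter_mem_le_one v)
    induction e using Sym2.ind with
    | _ x y =>
      have hxy : x ≠ y := (hm.1 he : G.Adj x y).ne
      have : bipartiteAbove (fun e v => v ∈ e) univ s(x, y) = {x, y} := by
        ext; simp [bipartiteAbove]
      rw [this, card_pair hxy]
  rw [card_univ] at this
  omega

theorem matNum_le_card_of_isVertexCover [Finite V] {G : SimpleGraph V} (c : Finset V)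
    (hc : G.IsVertexCover c) : matNum G ≤ #c := by
  classical
  refine matNum_le_iff.2 fun m hm => ?_
  have : #m * 1 ≤ #c * 1 := by
    refine card_mul_le_card_mul (fun e v => v ∈ e) (fun e he => ?_)
      (fun v _ => hm.card_filter_mem_le_one v)
    induction e using Sym2.ind with
    | _ x y =>
      rcases hc (hm.1 he : G.Adj x y) with h | h
      · exact card_pos.2 ⟨x, by simpa [bipartiteAbove] using h⟩
      · exact card_pos.2 ⟨y, by simpa [bipartiteAbove] using h⟩
  omega


theorem IsMatchingFinset.comap {G : SimpleGraph V} {H : SimpleGraph W} (f : G ↪g H)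
    {m : Finset (Sym2 W)} (hm : IsMatchingFinset H m) :
    IsMatchingFinset G (m.preimage (Sym2.map f) (Sym2.map.injective f.injective).injOn) := by
  refine ⟨fun e he => ?_, fun e he e' he' hne v hv => ?_⟩
  · induction e using Sym2.ind with
    | _ x y => exact f.map_adj_iff.1 (hm.1 (mem_preimage.1 he))
  · exact hm.2 _ (mem_preimage.1 he) _ (mem_preimage.1 he')
      ((Sym2.map.injective f.injective).ne hne) (f v)
      ⟨Sym2.mem_map.2 ⟨v, hv.1, rfl⟩, Sym2.mem_map.2 ⟨v, hv.2, rfl⟩⟩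

namespace SimpleGraph.Iso

variable {G : SimpleGraph V} {H : SimpleGraph W}

theorem edgeCount_eq (f : G ≃g H) : edgeCount G = edgeCount H := by
  simpa only [edgeCount, Nat.card_coe_set_eq] using Nat.card_congr f.mapEdgeSet

theorem ncard_neighborSet_eq (f : G ≃g H) (v : V) :
    (H.neighborSet (f v)).ncard = (G.neighborSet v).ncard := by
  simpa only [Nat.card_coe_set_eq] using Nat.card_congr (f.mapNeighborSet v).symm

theorem matNum_le [Finite V] [Finite W] (f : G ≃g H) : matNum H ≤ matNum G := by
  classical
  refine matNum_le_iff.2 fun m hm => ?_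
  have hsurj : ∀ e ∈ m, e ∈ Set.range (Sym2.map f) := fun e _ =>
    ⟨Sym2.map f.symm e, by simp [Sym2.map_map]⟩
  rw [← filter_true_of_mem hsurj, ← card_preimage _ _ (Sym2.map.injective f.injective).injOn]
  exact matNum_le_iff.1 le_rfl _ (hm.comap f.toEmbedding)

end SimpleGraph.Iso

def IsRealization (Δ b e : ℕ) (G : SimpleGraph V) : Prop :=
  (∀ v, ∃ u, G.Adj v u) ∧ maxDeg G ≤ Δ ∧ matNum G ≤ b ∧ edgeCount G = e

theorem IsRealization.iso [Finite V] [Finite W] {G : SimpleGraph V} {H : SimpleGraph W}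
    {Δ b e : ℕ} (hG : IsRealization Δ b e G) (f : G ≃g H) : IsRealization Δ b e H := by
  obtain ⟨hiso, hdeg, hmat, hedge⟩ := hG
  refine ⟨fun v => ?_, maxDeg_le_iff.2 fun v => ?_, f.matNum_le.trans hmat,
    f.edgeCount_eq ▸ hedge⟩
  · obtain ⟨u, hu⟩ := hiso (f.symm v)
    exact ⟨f u, by simpa using f.map_adj_iff.2 hu⟩
  · rw [← f.apply_symm_apply v, f.ncard_neighborSet_eq]
    exact maxDeg_le_iff.1 hdeg _

theorem edgeCount_sum (G : SimpleGraph V) (H : SimpleGraph W) [Finite V] [Finite W] :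
    edgeCount (G ⊕g H) = edgeCount G + edgeCount H := by
  simp only [edgeCount, ← Nat.card_coe_set_eq, Nat.card_congr edgeSetSumEquiv, Nat.card_sum]

theorem matNum_sum_le [Finite V] [Finite W] (G : SimpleGraph V) (H : SimpleGraph W) :
    matNum (G ⊕g H) ≤ matNum G + matNum H := by
  classical
  refine matNum_le_iff.2 fun m hm => ?_
  have hcover : ∀ e ∈ m, e ∈ Set.range (Sym2.map (Sum.inl : V → V ⊕ W)) ∨
      e ∈ Set.range (Sym2.map (Sum.inr : W → V ⊕ W)) := by
    intro e he
    induction e using Sym2.ind with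
    | _ x y =>
      have hxy : (G ⊕g H).Adj x y := hm.1 he
      rcases x with x | x <;> rcases y with y | y
      · exact Or.inl ⟨s(x, y), rfl⟩
      · simp at hxy
      · simp at hxy
      · exact Or.inr ⟨s(x, y), rfl⟩
  calc #m = #({e ∈ m | e ∈ Set.range (Sym2.map (Sum.inl : V → V ⊕ W))} ∪
        {e ∈ m | e ∈ Set.range (Sym2.map (Sum.inr : W → V ⊕ W))}) := by
        rw [← filter_or, filter_true_of_mem hcover]
    _ ≤ _ := card_union_le _ _
    _ ≤ matNum G + matNum H := by
        rw [← card_preimage _ _ (Sym2.map.injective Sum.inl_injective).injOn,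
          ← card_preimage _ _ (Sym2.map.injective Sum.inr_injective).injOn]
        exact add_le_add (matNum_le_iff.1 le_rfl _ (hm.comap Embedding.sumInl))
          (matNum_le_iff.1 le_rfl _ (hm.comap Embedding.sumInr))

theorem IsRealization.sum [Finite V] [Finite W] {G : SimpleGraph V} {H : SimpleGraph W}
    {Δ b₁ b₂ e₁ e₂ : ℕ} (hG : IsRealization Δ b₁ e₁ G) (hH : IsRealization Δ b₂ e₂ H) :
    IsRealization Δ (b₁ + b₂) (e₁ + e₂) (G ⊕g H) := by
  obtain ⟨hGi, hGd, hGm, hGe⟩ := hG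
  obtain ⟨hHi, hHd, hHm, hHe⟩ := hH
  refine ⟨?_, maxDeg_le_iff.2 ?_, (matNum_sum_le G H).trans (add_le_add hGm hHm),
    by rw [edgeCount_sum, hGe, hHe]⟩
  · rintro (v | v)
    · obtain ⟨u, hu⟩ := hGi v
      exact ⟨.inl u, by simpa⟩
    · obtain ⟨u, hu⟩ := hHi v
      exact ⟨.inr u, by simpa⟩
  · rintro (v | v)
    · rw [neighborSet_sum_inl, Set.ncard_image_of_injective _ Sum.inl_injective]
      exact maxDeg_le_iff.1 hGd v
    · rw [neighborSet_sum_inr, Set.ncard_image_of_injective _ Sum.inr_injective]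
      exact maxDeg_le_iff.1 hHd v

def realizable (Δ : ℕ) : AddSubmonoid (ℕ × ℕ × ℕ) where
  carrier := {x | ∃ G : SimpleGraph (Fin x.1), IsRealization Δ x.2.1 x.2.2 G}
  zero_mem' := ⟨⊥, fun v => v.elim0, maxDeg_le_iff.2 fun v => v.elim0,
    by simpa using matNum_le_card_div_two (⊥ : SimpleGraph (Fin 0)), by simp [edgeCount]⟩
  add_mem' := by
    rintro ⟨n₁, b₁, e₁⟩ ⟨n₂, b₂, e₂⟩ ⟨G, hG⟩ ⟨H, hH⟩
    exact ⟨_, (hG.sum hH).iso ((G ⊕g H).overFinIso (by simp))⟩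

theorem mem_realizable_iff {Δ : ℕ} {x : ℕ × ℕ × ℕ} :
    x ∈ realizable Δ ↔ ∃ G : SimpleGraph (Fin x.1), IsRealization Δ x.2.1 x.2.2 G :=
  ⟨id, id⟩

theorem mem_realizable [Fintype V] {G : SimpleGraph V} {Δ b e : ℕ}
    (hG : IsRealization Δ b e G) : (Fintype.card V, b, e) ∈ realizable Δ :=
  mem_realizable_iff.2 ⟨_, hG.iso (G.overFinIso rfl)⟩

section AlmostRegular

variable [Fintype V] {G : SimpleGraph V} [DecidableRel G.Adj] {Δ : ℕ}

theorem exists_adj_of_card_mul_le (hdeg : ∀ v, G.degree v ≤ Δ) (hΔ : 2 ≤ Δ)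
    (he : Fintype.card V * Δ ≤ 2 * #G.edgeFinset + 1) (v : V) : ∃ u, G.Adj v u := by
  classical
  by_contra! hv
  have hv0 : G.degree v = 0 := by
    rw [← card_neighborFinset_eq_degree, card_eq_zero, eq_empty_iff_forall_notMem]
    simpa using hv
  have hrest : 2 * #G.edgeFinset ≤ (Fintype.card V - 1) * Δ := by
    rw [← sum_degrees_eq_twice_card_edges, ← add_sum_erase _ _ (mem_univ v), hv0, zero_add]
    calc ∑ u ∈ univ.erase v, G.degree u ≤ #(univ.erase v) • Δ :=
          sum_le_card_nsmul _ _ _ fun u _ => hdeg u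
      _ = (Fintype.card V - 1) * Δ := by
          rw [card_erase_of_mem (mem_univ v), card_univ, smul_eq_mul]
  have hΔle := Nat.le_mul_of_pos_left Δ (Fintype.card_pos_iff.2 ⟨v⟩)
  rw [Nat.sub_one_mul] at hrest
  omega

theorem isRealization_of_card_mul_le (hdeg : ∀ v, G.degree v ≤ Δ) (hΔ : 2 ≤ Δ)
    (he : Fintype.card V * Δ ≤ 2 * #G.edgeFinset + 1) :
    IsRealization Δ (Fintype.card V / 2) (Fintype.card V * Δ / 2) G := by
  refine ⟨exists_adj_of_card_mul_le hdeg hΔ he,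
    maxDeg_le_iff.2 fun v => (ncard_neighborSet_eq_degree G v).trans_le (hdeg v),
    matNum_le_card_div_two G, ?_⟩
  have hsum : 2 * #G.edgeFinset ≤ Fintype.card V * Δ := by
    rw [← sum_degrees_eq_twice_card_edges, ← card_univ, ← smul_eq_mul]
    exact sum_le_card_nsmul _ _ _ fun v _ => hdeg v
  rw [edgeCount_eq_card_edgeFinset]
  omega

end AlmostRegular

theorem isRealization_compl [Fintype V] {H : SimpleGraph V} {c Δ : ℕ}
    (hn : Fintype.card V = c + Δ + 1) (hΔ : 2 ≤ Δ) (hdeg : ∀ v, c ≤ (H.neighborSet v).ncard)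
    (he : 2 * edgeCount H ≤ Fintype.card V * c + 1) :
    IsRealization Δ (Fintype.card V / 2) (Fintype.card V * Δ / 2) Hᶜ := by
  classical
  simp only [ncard_neighborSet_eq_degree] at hdeg
  rw [edgeCount_eq_card_edgeFinset] at he
  have hcompl : ∀ v, Hᶜ.degree v + H.degree v = c + Δ := fun v => by
    have := H.degree_lt_card_verts v
    rw [degree_compl]
    omega
  refine isRealization_of_card_mul_le (fun v => by have := hcompl v; have := hdeg v; omega) hΔ ?_
  have hsum : 2 * #Hᶜ.edgeFinset + 2 * #H.edgeFinset =
      Fintype.card V * c + Fintype.card V * Δ := by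
    rw [← sum_degrees_eq_twice_card_edges, ← sum_degrees_eq_twice_card_edges, ← sum_add_distrib,
      sum_congr rfl fun v _ => hcompl v, sum_const, card_univ, smul_eq_mul, mul_add]
  omega

theorem ncard_neighborSet_sup_of_disjoint {G H : SimpleGraph V} [Finite V] (h : Disjoint G H)
    (v : V) : ((G ⊔ H).neighborSet v).ncard = (G.neighborSet v).ncard + (H.neighborSet v).ncard :=
  Set.ncard_union_eq (disjoint_neighborSet.2 h v)

theorem edgeCount_sup_le [Finite V] (G H : SimpleGraph V) :
    edgeCount (G ⊔ H) ≤ edgeCount G + edgeCount H := by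
  rw [edgeCount, edgeSet_sup]
  exact Set.ncard_union_le _ _

theorem ncard_neighborSet_cycleGraph {n : ℕ} (hn : 3 ≤ n) (v : Fin n) :
    ((cycleGraph n).neighborSet v).ncard = 2 := by
  classical
  obtain ⟨m, rfl⟩ : ∃ m, n = m + 3 := ⟨n - 3, by omega⟩
  rw [ncard_neighborSet_eq_degree, cycleGraph_degree_three_le]

theorem edgeCount_cycleGraph {n : ℕ} (hn : 3 ≤ n) : edgeCount (cycleGraph n) = n := by
  classical
  have := sum_degrees_eq_twice_card_edges (cycleGraph n)
  simp only [← ncard_neighborSet_eq_degree, ncard_neighborSet_cycleGraph hn, sum_const, card_univ,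
    Fintype.card_fin, smul_eq_mul] at this
  rw [edgeCount_eq_card_edgeFinset]
  omega

def halfTurnChords (k : ℕ) : SimpleGraph (Fin (2 * k + 1)) :=
  SimpleGraph.fromRel fun x y => x.val + k = y.val

theorem halfTurnChords_adj {k : ℕ} (hk : 1 ≤ k) {x y : Fin (2 * k + 1)} :
    (halfTurnChords k).Adj x y ↔ x.val + k = y.val ∨ y.val + k = x.val := by
  rw [halfTurnChords, fromRel_adj, and_iff_right_iff_imp]
  rintro (h | h) rfl <;> omega

theorem one_le_ncard_neighborSet_halfTurnChords {k : ℕ} (hk : 1 ≤ k) (v : Fin (2 * k + 1)) :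
    1 ≤ ((halfTurnChords k).neighborSet v).ncard := by
  rw [Nat.one_le_iff_ne_zero, ← Nat.pos_iff_ne_zero, Set.ncard_pos]
  by_cases hv : v.val ≤ k
  · exact ⟨⟨v.val + k, by omega⟩, by simp [halfTurnChords_adj hk]⟩
  · exact ⟨⟨v.val - k, by omega⟩, by simp [halfTurnChords_adj hk]; omega⟩

theorem edgeCount_halfTurnChords_le (k : ℕ) : edgeCount (halfTurnChords k) ≤ k + 1 := by
  have hsub : (halfTurnChords k).edgeSet ⊆ (fun i : Fin (k + 1) =>
      s((⟨i, by omega⟩ : Fin (2 * k + 1)), ⟨i + k, by omega⟩)) '' Set.univ := by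
    intro e he
    induction e using Sym2.ind with
    | _ x y =>
      rw [mem_edgeSet, halfTurnChords, fromRel_adj] at he
      rcases he.2 with h | h
      · exact ⟨⟨x, by omega⟩, trivial, by simp [h]⟩
      · exact ⟨⟨y, by omega⟩, trivial, by simp [h, Sym2.eq_swap]⟩
  simpa [edgeCount] using (Set.ncard_le_ncard hsub).trans (Set.ncard_image_le Set.finite_univ)

theorem disjoint_cycleGraph_halfTurnChords {k : ℕ} (hk : 2 ≤ k) :
    Disjoint (cycleGraph (2 * k + 1)) (halfTurnChords k) := by
  refine disjoint_left.2 fun x y hc hf => ?_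
  rw [cycleGraph_adj'] at hc
  rcases (halfTurnChords_adj (by omega)).1 hf with h | h
  · rw [Fin.sub_val_of_le (show x ≤ y by rw [Fin.le_def]; omega),
      Fin.coe_sub_iff_lt.2 (show x < y by rw [Fin.lt_def]; omega)] at hc
    omega
  · rw [Fin.sub_val_of_le (show y ≤ x by rw [Fin.le_def]; omega),
      Fin.coe_sub_iff_lt.2 (show y < x by rw [Fin.lt_def]; omega)] at hc
    omega

theorem exists_le_ncard_neighborSet_two_mul_edgeCount_le {k c : ℕ} (hk : 2 ≤ k) (hc : c ≤ 3) :
    ∃ H : SimpleGraph (Fin (2 * k + 1)),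
      (∀ v, c ≤ (H.neighborSet v).ncard) ∧ 2 * edgeCount H ≤ (2 * k + 1) * c + 1 := by
  have hF := edgeCount_halfTurnChords_le k
  have hC := edgeCount_cycleGraph (n := 2 * k + 1) (by omega)
  interval_cases c
  · exact ⟨⊥, fun v => Nat.zero_le _, by simp [edgeCount]⟩
  · exact ⟨halfTurnChords k, one_le_ncard_neighborSet_halfTurnChords (by omega), by omega⟩
  · exact ⟨cycleGraph _, fun v => (ncard_neighborSet_cycleGraph (by omega) v).ge, by omega⟩
  · refine ⟨cycleGraph _ ⊔ halfTurnChords k, fun v => ?_, ?_⟩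
    · rw [ncard_neighborSet_sup_of_disjoint (disjoint_cycleGraph_halfTurnChords hk),
        ncard_neighborSet_cycleGraph (by omega)]
      have := one_le_ncard_neighborSet_halfTurnChords (by omega) v
      omega
    · have := edgeCount_sup_le (cycleGraph (2 * k + 1)) (halfTurnChords k)
      omega

theorem oddOrder_mem_realizable {k Δ : ℕ} (hk : 2 ≤ k) (hΔ : 2 ≤ Δ) (hΔk : Δ ≤ 2 * k)
    (hkΔ : 2 * k ≤ Δ + 3) : (2 * k + 1, k, Δ * k + Δ / 2) ∈ realizable Δ := by
  obtain ⟨H, hdeg, he⟩ :=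
    exists_le_ncard_neighborSet_two_mul_edgeCount_le (c := 2 * k - Δ) hk (by omega)
  have h := mem_realizable (isRealization_compl (by simp; omega) hΔ hdeg (by simpa using he))
  rwa [Fintype.card_fin, show (2 * k + 1) / 2 = k by omega,
    show (2 * k + 1) * Δ = 2 * (Δ * k) + Δ by ring, Nat.mul_add_div two_pos] at h

theorem completeBipartite_mem_realizable {a Δ : ℕ} (ha : 1 ≤ a) (haΔ : a ≤ Δ) :
    (a + Δ, a, a * Δ) ∈ realizable Δ := by
  have hinl : ∀ x, (completeBipartiteGraph (Fin a) (Fin Δ)).neighborSet (.inl x) =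
      Set.range Sum.inr := fun x => by ext (u | u) <;> simp
  have hinr : ∀ y, (completeBipartiteGraph (Fin a) (Fin Δ)).neighborSet (.inr y) =
      Set.range Sum.inl := fun y => by ext (u | u) <;> simp
  have hcover : (completeBipartiteGraph (Fin a) (Fin Δ)).IsVertexCover
      ↑(univ.map (Function.Embedding.inl : Fin a ↪ Fin a ⊕ Fin Δ)) := by
    rintro (x | x) (y | y) h <;> simp_all
  have h : IsRealization Δ a (a * Δ) (completeBipartiteGraph (Fin a) (Fin Δ)) := by
    refine ⟨?_, maxDeg_le_iff.2 ?_, by simpa using matNum_le_card_of_isVertexCover _ hcover, ?_⟩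
    · rintro (x | y)
      · exact ⟨.inr ⟨0, by omega⟩, by simp⟩
      · exact ⟨.inl ⟨0, by omega⟩, by simp⟩
    · rintro (x | y)
      · rw [hinl, Set.ncard_range_of_injective Sum.inr_injective, Nat.card_fin]
      · rwa [hinr, Set.ncard_range_of_injective Sum.inl_injective, Nat.card_fin]
    · rw [edgeCount, Set.ncard_def, encard_edgeSet_completeBipartiteGraph]
      simp
  simpa using mem_realizable h

theorem exists_ne_mem_realizable_of_swap {Δ : ℕ} {R P Q : ℕ × ℕ × ℕ} (hR : R ∈ realizable Δ)
    (hP : P ∈ realizable Δ) (hQ : Q ∈ realizable Δ) (h₂ : P.2 = Q.2) (h₁ : P.1 ≠ Q.1) (N : ℕ) :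
    ∃ n ≠ N, (n, (R + P).2) ∈ realizable Δ := by
  by_cases hN : R.1 + P.1 = N
  · refine ⟨R.1 + Q.1, by omega, ?_⟩
    rw [Prod.snd_add, h₂]
    exact add_mem hR hQ
  · exact ⟨R.1 + P.1, hN, add_mem hR hP⟩

theorem exists_ne_mem_realizable {Δ ν : ℕ} (hΔ : 2 ≤ Δ) (hν : 2 ≤ ν)
    (hndvd : ¬ (Δ + 1) / 2 ∣ ν) (N : ℕ) :
    ∃ n ≠ N, (n, ν, Δ * ν + ν / ((Δ + 1) / 2) * (Δ / 2)) ∈ realizable Δ := by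
  set j := (Δ + 1) / 2 with hj
  have hj2 : 2 ≤ j := by
    by_contra! h
    interval_cases h' : j
    · omega
    · exact hndvd (one_dvd ν)
  obtain ⟨t, r, hr, hrj, rfl⟩ : ∃ t r, 0 < r ∧ r < j ∧ ν = j * t + r :=
    ⟨ν / j, ν % j, Nat.pos_of_ne_zero fun h => hndvd (Nat.dvd_of_mod_eq_zero h),
      Nat.mod_lt _ (by omega), (Nat.div_add_mod ν j).symm⟩
  rw [show (j * t + r) / j = t by rw [Nat.mul_add_div (by omega), Nat.div_eq_of_lt hrj, add_zero]]
  have hJ := oddOrder_mem_realizable (k := j) hj2 hΔ (by omega) (by omega)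
  have hJ' := oddOrder_mem_realizable (k := j + 1) (by omega) hΔ (by omega) (by omega)
  have hstar := completeBipartite_mem_realizable (a := 1) (Δ := Δ) le_rfl (by omega)
  have hK₂ := completeBipartite_mem_realizable (a := 2) (by omega) hΔ
  rcases Nat.eq_zero_or_pos t with rfl | ht
  · obtain ⟨r, rfl⟩ : ∃ r', r = r' + 2 := ⟨r - 2, by omega⟩
    obtain ⟨n, hn, h⟩ := exists_ne_mem_realizable_of_swap (nsmul_mem hstar r)
      (add_mem hstar hstar) hK₂ (by simp; ring) (by simp; omega) N
    refine ⟨n, hn, ?_⟩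
    convert h using 2
    simp only [Prod.smul_mk, Prod.mk_add_mk, smul_eq_mul, Prod.mk.injEq]
    constructor <;> ring
  · obtain ⟨t, rfl⟩ : ∃ t', t = t' + 1 := ⟨t - 1, by omega⟩
    obtain ⟨r, rfl⟩ : ∃ r', r = r' + 1 := ⟨r - 1, by omega⟩
    obtain ⟨n, hn, h⟩ := exists_ne_mem_realizable_of_swap
      (add_mem (nsmul_mem hJ t) (nsmul_mem hstar r)) (add_mem hJ hstar) hJ' (by simp; ring)
      (by simp; omega) N
    refine ⟨n, hn, ?_⟩
    convert h using 2
    simp only [Prod.smul_mk, Prod.mk_add_mk, smul_eq_mul, Prod.mk.injEq]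
    constructor <;> ring

end

theorem exists_nonisomorphic_extremal_general (Δ ν : ℕ) (hΔ : 2 ≤ Δ) (hν : 2 ≤ ν)
    (hndvd : ¬ ((Δ + 1) / 2 ∣ ν))
    {V : Type*} (G₁ : SimpleGraph V) :
    ∃ (n : ℕ) (G₂ : SimpleGraph (Fin n)),
      (∀ v, ∃ u, G₂.Adj v u) ∧ maxDeg G₂ ≤ Δ ∧ matNum G₂ ≤ ν ∧
      edgeCount G₂ = Δ * ν + (ν / ((Δ + 1) / 2)) * (Δ / 2) ∧
      ¬ Nonempty (G₂ ≃g G₁) := by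
  obtain ⟨n, hn, G₂, hiso, hdeg, hmat, hedge⟩ :=
    exists_ne_mem_realizable hΔ hν hndvd (Nat.card V)
  exact ⟨n, G₂, hiso, hdeg, hmat, hedge, fun ⟨f⟩ => hn (by simpa using Nat.card_congr f.toEquiv)⟩

/-- If `Δ, ν ≥ 2`, `⌈Δ/2⌉ ∤ ν`, and `G₁` is an extremal graph (no isolated
vertices, `Δ(G₁) ≤ Δ`, `ν(G₁) ≤ ν`, `Δν + ⌊ν/⌈Δ/2⌉⌋⌊Δ/2⌋` edges), then there is another
such extremal graph `G₂` not isomorphic to `G₁`. -/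
theorem exists_nonisomorphic_extremal (Δ ν : ℕ) (hΔ : 2 ≤ Δ) (hν : 2 ≤ ν)
    (hndvd : ¬ ((Δ + 1) / 2 ∣ ν))
    {V : Type*} [Fintype V] (G₁ : SimpleGraph V)
    (hiso : ∀ v, ∃ u, G₁.Adj v u)
    (hdeg : maxDeg G₁ ≤ Δ) (hmat : matNum G₁ ≤ ν)
    (hE : edgeCount G₁ = Δ * ν + (ν / ((Δ + 1) / 2)) * (Δ / 2)) :
    ∃ (n : ℕ) (G₂ : SimpleGraph (Fin n)),
      (∀ v, ∃ u, G₂.Adj v u) ∧ maxDeg G₂ ≤ Δ ∧ matNum G₂ ≤ ν ∧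
      edgeCount G₂ = Δ * ν + (ν / ((Δ + 1) / 2)) * (Δ / 2) ∧
      ¬ Nonempty (G₂ ≃g G₁) :=
  exists_nonisomorphic_extremal_general Δ ν hΔ hν hndvd G₁
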